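/- Let T be a finite tree on n ≥ 4 vertices that admits a redundant identifying code. Then RED:IC(T) = n if and only if every vertex v of T satisfies at least one of the following: (i) v is a leaf; (ii) v is a support vertex; (iii) v is adjacent to a support vertex of degree 3; (iv) there exist vertices w, u with v–w–u a path in T and both w and u of degree 2. -/

import Mathlib

open scoped symmDiff

variable {V : Type*}

/-- The closed neighborhood of a vertex. -/
def closedNbhd (G : SimpleGraph V) (v : V) : Set V := insert v (G.neighborSet v)

/-- A vertex `v` is at least `k`-dominated by `S`. -/
def kDominated (G : SimpleGraph V) (S : Set V) (k : ℕ) (v : V) : Prop :=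
  k ≤ (closedNbhd G v ∩ S).ncard

/-- Two vertices `u` and `v` are `k`-distinguished by `S`. -/
def kDistinguished (G : SimpleGraph V) (S : Set V) (k : ℕ) (u v : V) : Prop :=
  k ≤ ((closedNbhd G u ∩ S) ∆ (closedNbhd G v ∩ S)).ncard

/-- `S` is an identifying code of `G`. -/
def IsIC (G : SimpleGraph V) (S : Set V) : Prop :=
  (∀ v, kDominated G S 1 v) ∧ ∀ u v, u ≠ v → kDistinguished G S 1 u v

/-- `S` is a redundant identifying code of `G`. -/
def IsRedIC (G : SimpleGraph V) (S : Set V) : Prop :=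
  (∀ v, kDominated G S 2 v) ∧ ∀ u v, u ≠ v → kDistinguished G S 2 u v

/-- The minimum cardinality of a redundant identifying code of `G`. -/
noncomputable def redIC (G : SimpleGraph V) : ℕ :=
  sInf {n | ∃ S : Set V, IsRedIC G S ∧ S.ncard = n}

/-- The degree of a vertex, as the cardinality of its open neighborhood. -/
noncomputable def deg (G : SimpleGraph V) (v : V) : ℕ := (G.neighborSet v).ncard

/-- A leaf is a vertex of degree 1. -/
def IsLeaf (G : SimpleGraph V) (v : V) : Prop := deg G v = 1

/-- A support vertex is a vertex adjacent to a leaf. -/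
def IsSupport (G : SimpleGraph V) (v : V) : Prop := ∃ u, G.Adj v u ∧ IsLeaf G u

/-- Two distinct vertices are closed twins if they have the same closed neighborhood. -/
def ClosedTwins (G : SimpleGraph V) (u v : V) : Prop :=
  u ≠ v ∧ closedNbhd G u = closedNbhd G v

/-! Since redundant identifying codes are closed under supersets, `RED:IC(T) = n` exactly when
no set `V ∖ {v}` is one. Deleting `v` lowers by one each of the counts `|N[u]|` and
`|N[a] ∆ N[b]|` in which `v` occurs, so `V ∖ {v}` fails precisely when `v` lies in a closed
neighbourhood of size 2 or in a symmetric difference `N[a] ∆ N[b]` of size 2. In a tree,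
`|N[a] ∆ N[b]| = deg a + deg b - 2` for adjacent `a, b`; for non-adjacent `a, b` a difference of
size 2 forces `N(a) ⊆ N(b)` and `N(b) ⊆ N(a)`, so both are leaves since a tree has no 4-cycle.
Unwinding these configurations gives conditions (i)–(iv). -/

lemma Set.ncard_inter_compl_singleton_lt_iff {α : Type*} {A : Set α} {k : ℕ}
    (hk : k ≤ A.ncard) (a : α) (hA : A.Finite := by toFinite_tac) :
    (A ∩ {a}ᶜ).ncard < k ↔ a ∈ A ∧ A.ncard = k := by
  rw [← Set.sdiff_eq]
  by_cases ha : a ∈ A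
  · have := Set.ncard_pos hA |>.mpr ⟨a, ha⟩
    rw [Set.ncard_sdiff_singleton_of_mem ha]
    simp only [ha, true_and]
    omega
  · simp [ha, Set.sdiff_singleton_eq_self ha, hk]

variable {G : SimpleGraph V}

lemma mem_closedNbhd {u v : V} : u ∈ closedNbhd G v ↔ u = v ∨ G.Adj v u := Iff.rfl

lemma ncard_closedNbhd [Finite V] (v : V) : (closedNbhd G v).ncard = deg G v + 1 :=
  Set.ncard_insert_of_notMem (G.notMem_neighborSet_self)

lemma IsRedIC.mono [Finite V] {S T : Set V} (hST : S ⊆ T) (h : IsRedIC G S) :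
    IsRedIC G T := by
  have hle (A : Set V) : (A ∩ S).ncard ≤ (A ∩ T).ncard :=
    Set.ncard_le_ncard (Set.inter_subset_inter_right A hST)
  refine ⟨fun v => (h.1 v).trans (hle _), fun u v huv => (h.2 u v huv).trans ?_⟩
  simpa only [← Set.inter_symmDiff_distrib_right] using hle _

lemma IsRedIC.one_le_deg [Finite V] {S : Set V} (h : IsRedIC G S) (v : V) : 1 ≤ deg G v := by
  have := (h.1 v).trans (Set.ncard_le_ncard Set.inter_subset_left)
  rw [ncard_closedNbhd] at this
  omega

lemma not_isRedIC_compl_singleton_iff [Finite V] (h : IsRedIC G Set.univ) (v : V) :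
    ¬ IsRedIC G {v}ᶜ ↔ (∃ u, v ∈ closedNbhd G u ∧ (closedNbhd G u).ncard = 2) ∨
      ∃ a b, a ≠ b ∧ v ∈ closedNbhd G a ∆ closedNbhd G b ∧
        (closedNbhd G a ∆ closedNbhd G b).ncard = 2 := by
  obtain ⟨hdom, hdis⟩ := h
  simp only [IsRedIC, kDominated, kDistinguished, Set.inter_univ,
    ← Set.inter_symmDiff_distrib_right] at hdom hdis ⊢
  simp only [not_and_or, not_forall, not_le, exists_prop]
  refine or_congr (exists_congr fun u => ?_) (exists₂_congr fun a b => ?_)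
  · exact Set.ncard_inter_compl_singleton_lt_iff (hdom u) v
  · exact and_congr_right fun hab => Set.ncard_inter_compl_singleton_lt_iff (hdis a b hab) v

lemma redIC_eq_ncard_univ_iff [Finite V] (h : IsRedIC G Set.univ) :
    redIC G = Nat.card V ↔ ∀ v, ¬ IsRedIC G {v}ᶜ := by
  constructor
  · intro hred v hv
    have hle : redIC G ≤ ({v}ᶜ : Set V).ncard := Nat.sInf_le ⟨_, hv, rfl⟩
    have : 0 < Nat.card V := Nat.card_pos_iff.mpr ⟨⟨v⟩, inferInstance⟩
    rw [Set.ncard_compl, Set.ncard_singleton, ← hred] at hle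
    omega
  · intro hall
    have huniq (S : Set V) (hS : IsRedIC G S) : S = Set.univ := by
      by_contra hne
      obtain ⟨v, hv⟩ := (Set.ne_univ_iff_exists_notMem S).mp hne
      exact hall v (hS.mono (Set.subset_compl_singleton_iff.mpr hv))
    have : {n | ∃ S : Set V, IsRedIC G S ∧ S.ncard = n} = {Nat.card V} := by
      ext n
      constructor
      · rintro ⟨S, hS, rfl⟩
        rw [huniq S hS, Set.ncard_univ]
        exact Set.mem_singleton _
      · rintro rfl
        exact ⟨_, h, Set.ncard_univ V⟩
    rw [redIC, this, csInf_singleton]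

lemma eq_or_eq_of_mem_closedNbhd_symmDiff [Finite V] {a b x : V} (hab : a ≠ b)
    (hadj : ¬ G.Adj a b) (h : (closedNbhd G a ∆ closedNbhd G b).ncard ≤ 2)
    (hx : x ∈ closedNbhd G a ∆ closedNbhd G b) : x = a ∨ x = b := by
  by_contra! hxab
  have ha : a ∈ closedNbhd G a ∆ closedNbhd G b :=
    Or.inl ⟨Or.inl rfl, by rintro (h | h); exacts [hab h, hadj h.symm]⟩
  have hb : b ∈ closedNbhd G a ∆ closedNbhd G b :=
    Or.inr ⟨Or.inl rfl, by rintro (h | h); exacts [hab h.symm, hadj h]⟩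
  have := (Set.two_lt_ncard_iff (Set.toFinite _)).mpr
    ⟨a, b, x, ha, hb, hx, hab, hxab.1.symm, hxab.2.symm⟩
  omega

/-- Conditions (i)–(iv); in a tree admitting a RED:IC they say that every RED:IC contains `v`. -/
def RedICForced (G : SimpleGraph V) (v : V) : Prop :=
  IsLeaf G v ∨ IsSupport G v ∨ (∃ w : V, G.Adj v w ∧ IsSupport G w ∧ deg G w = 3) ∨
    (∃ w u : V, G.Adj v w ∧ G.Adj w u ∧ u ≠ v ∧ deg G w = 2 ∧ deg G u = 2)

lemma redICForced_of_mem_closedNbhd [Finite V] {u v : V} (hv : v ∈ closedNbhd G u)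
    (h : (closedNbhd G u).ncard = 2) : RedICForced G v := by
  have hu : IsLeaf G u := by rw [ncard_closedNbhd] at h; exact Nat.succ_injective h
  rcases hv with rfl | huv
  · exact Or.inl hu
  · exact Or.inr (Or.inl ⟨u, huv.symm, hu⟩)

namespace SimpleGraph.IsAcyclic

variable {a b c v : V}

lemma not_adj_of_adj_of_adj (hG : G.IsAcyclic) (hab : G.Adj a b) (hbc : G.Adj b c) :
    ¬ G.Adj a c := fun hac => by
  classical
  exact hG.cliqueFree le_rfl {a, b, c} (is3Clique_triple_iff.mpr ⟨hab, hac, hbc⟩)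

lemma subsingleton_commonNeighbors (hG : G.IsAcyclic) (hab : a ≠ b) :
    (G.commonNeighbors a b).Subsingleton := by
  intro x hx y hy
  obtain ⟨hax, hbx⟩ := G.mem_commonNeighbors.mp hx
  obtain ⟨hay, hby⟩ := G.mem_commonNeighbors.mp hy
  have hpath {z : V} (haz : G.Adj a z) (hbz : G.Adj b z) :
      (Walk.cons haz (Walk.cons hbz.symm Walk.nil)).IsPath := by
    simp [haz.ne, hbz.ne', hab]
  have := (hG.subsingleton_path a b).elim ⟨_, hpath hax hbx⟩ ⟨_, hpath hay hby⟩
  simpa using congrArg (fun p : G.Path a b => p.1.snd) this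

lemma closedNbhd_symmDiff_of_adj (hG : G.IsAcyclic) (hab : G.Adj a b) :
    closedNbhd G a ∆ closedNbhd G b = (G.neighborSet a \ {b}) ∪ (G.neighborSet b \ {a}) := by
  ext x
  have := hG.not_adj_of_adj_of_adj hab (c := x)
  have := hG.not_adj_of_adj_of_adj hab.symm (c := x)
  simp only [Set.mem_symmDiff, mem_closedNbhd, Set.mem_union, Set.mem_sdiff,
    mem_neighborSet, Set.mem_singleton_iff]
  grind [G.adj_symm, G.loopless]

lemma mem_closedNbhd_symmDiff_of_adj (hG : G.IsAcyclic) (hab : G.Adj a b)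
    (hv : v ∈ G.neighborSet a \ {b}) : v ∈ closedNbhd G a ∆ closedNbhd G b := by
  rw [hG.closedNbhd_symmDiff_of_adj hab]
  exact Or.inl hv

variable [Finite V]

lemma ncard_closedNbhd_symmDiff_of_adj (hG : G.IsAcyclic) (hab : G.Adj a b) :
    (closedNbhd G a ∆ closedNbhd G b).ncard + 2 = deg G a + deg G b := by
  have hdisj : Disjoint (G.neighborSet a \ {b}) (G.neighborSet b \ {a}) :=
    Set.disjoint_left.mpr fun x hxa hxb => hG.not_adj_of_adj_of_adj hab hxb.1 hxa.1
  rw [hG.closedNbhd_symmDiff_of_adj hab, Set.ncard_union_eq hdisj,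
    Set.ncard_sdiff_singleton_of_mem (show b ∈ G.neighborSet a from hab),
    Set.ncard_sdiff_singleton_of_mem (show a ∈ G.neighborSet b from hab.symm)]
  have : 0 < deg G a := (Set.ncard_pos (Set.toFinite _)).mpr ⟨b, hab⟩
  have : 0 < deg G b := (Set.ncard_pos (Set.toFinite _)).mpr ⟨a, hab.symm⟩
  unfold deg at *
  omega

lemma deg_le_one_of_not_adj (hG : G.IsAcyclic) (hab : a ≠ b) (hadj : ¬ G.Adj a b)
    (h : (closedNbhd G a ∆ closedNbhd G b).ncard ≤ 2) :
    deg G a ≤ 1 := by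
  have hsub : G.neighborSet a ⊆ G.commonNeighbors a b := by
    intro x hax
    have hxb : x ≠ b := by rintro rfl; exact hadj hax
    have hx : x ∉ closedNbhd G a ∆ closedNbhd G b := fun hx =>
      (eq_or_eq_of_mem_closedNbhd_symmDiff hab hadj h hx).elim (G.ne_of_adj hax).symm hxb
    have : x ∈ closedNbhd G b := by
      by_contra hxB
      exact hx (Or.inl ⟨Or.inr hax, hxB⟩)
    exact ⟨hax, this.resolve_left hxb⟩
  exact (Set.ncard_le_ncard hsub).trans
    (Set.ncard_le_one_iff_subsingleton.mpr (hG.subsingleton_commonNeighbors hab))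

lemma redICForced_of_adj (hG : G.IsAcyclic) (hab : G.Adj a b)
    (h : (closedNbhd G a ∆ closedNbhd G b).ncard = 2) (hv : v ∈ G.neighborSet a \ {b}) :
    RedICForced G v := by
  have hsum := hG.ncard_closedNbhd_symmDiff_of_adj hab
  have hvb : v ≠ b := hv.2
  have ha : 2 ≤ deg G a := (Set.one_lt_ncard_iff (Set.toFinite _)).mpr ⟨v, b, hv.1, hab, hvb⟩
  have hb : 1 ≤ deg G b := (Set.ncard_pos (Set.toFinite _)).mpr ⟨a, hab.symm⟩
  obtain hda | hda : deg G a = 2 ∨ deg G a = 3 := by omega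
  · exact Or.inr (Or.inr (Or.inr ⟨a, b, hv.1.symm, hab, hvb.symm, hda, by omega⟩))
  · exact Or.inr (Or.inr (Or.inl ⟨a, hv.1.symm, ⟨b, hab, by unfold IsLeaf; omega⟩, hda⟩))

lemma redICForced_of_not_adj (hG : G.IsAcyclic) (hdeg : ∀ u, 1 ≤ deg G u) (hab : a ≠ b)
    (hadj : ¬ G.Adj a b) (h : (closedNbhd G a ∆ closedNbhd G b).ncard = 2)
    (hv : v ∈ closedNbhd G a ∆ closedNbhd G b) : RedICForced G v := by
  refine Or.inl ?_
  rcases eq_or_eq_of_mem_closedNbhd_symmDiff hab hadj h.le hv with rfl | rfl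
  · exact le_antisymm (hG.deg_le_one_of_not_adj hab hadj h.le) (hdeg v)
  · rw [symmDiff_comm] at h
    exact le_antisymm (hG.deg_le_one_of_not_adj hab.symm (fun h => hadj h.symm) h.le) (hdeg v)

theorem redICForced_iff (hG : G.IsAcyclic) (hdeg : ∀ u, 1 ≤ deg G u) (v : V) :
    RedICForced G v ↔ (∃ u, v ∈ closedNbhd G u ∧ (closedNbhd G u).ncard = 2) ∨
      ∃ a b, a ≠ b ∧ v ∈ closedNbhd G a ∆ closedNbhd G b ∧
        (closedNbhd G a ∆ closedNbhd G b).ncard = 2 := by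
  constructor
  · rintro (hv | ⟨u, hvu, hu⟩ | ⟨w, hvw, ⟨u, hwu, hu⟩, hw⟩ |
      ⟨w, u, hvw, hwu, huv, hw, hu⟩)
    · exact Or.inl ⟨v, Or.inl rfl, by rw [ncard_closedNbhd, hv]⟩
    · exact Or.inl ⟨u, Or.inr hvu.symm, by rw [ncard_closedNbhd, hu]⟩
    · by_cases hvu : v = u
      · exact Or.inl ⟨v, Or.inl rfl, by rw [ncard_closedNbhd, hvu, hu]⟩
      · refine Or.inr ⟨w, u, hwu.ne,
          hG.mem_closedNbhd_symmDiff_of_adj hwu ⟨hvw.symm, hvu⟩, ?_⟩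
        have := hG.ncard_closedNbhd_symmDiff_of_adj hwu
        unfold IsLeaf at hu
        omega
    · refine Or.inr ⟨w, u, hwu.ne,
        hG.mem_closedNbhd_symmDiff_of_adj hwu ⟨hvw.symm, huv.symm⟩, ?_⟩
      have := hG.ncard_closedNbhd_symmDiff_of_adj hwu
      omega
  · rintro (⟨u, hvu, hu⟩ | ⟨a, b, hab, hv, h⟩)
    · exact redICForced_of_mem_closedNbhd hvu hu
    by_cases hadj : G.Adj a b
    · rw [hG.closedNbhd_symmDiff_of_adj hadj] at hv
      rcases hv with hv | hv
      · exact hG.redICForced_of_adj hadj h hv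
      · exact hG.redICForced_of_adj hadj.symm (by rwa [symmDiff_comm]) hv
    · exact hG.redICForced_of_not_adj hdeg hab hadj h hv

end SimpleGraph.IsAcyclic

theorem stmt_15_general {V : Type*} [Fintype V] (G : SimpleGraph V) (hT : G.IsTree)
    (hex : ∃ S : Set V, IsRedIC G S) :
    redIC G = Fintype.card V ↔
      ∀ v : V, IsLeaf G v ∨ IsSupport G v ∨
        (∃ w : V, G.Adj v w ∧ IsSupport G w ∧ deg G w = 3) ∨
        (∃ w u : V, G.Adj v w ∧ G.Adj w u ∧ u ≠ v ∧ deg G w = 2 ∧ deg G u = 2) := by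
  obtain ⟨S, hS⟩ := hex
  have huniv : IsRedIC G Set.univ := hS.mono (Set.subset_univ S)
  rw [← Nat.card_eq_fintype_card, redIC_eq_ncard_univ_iff huniv]
  exact forall_congr' fun v => (not_isRedIC_compl_singleton_iff huniv v).trans
    (hT.isAcyclic.redICForced_iff huniv.one_le_deg v).symm

theorem stmt_15 {V : Type*} [Fintype V] (G : SimpleGraph V) (hT : G.IsTree)
    (hn : 4 ≤ Fintype.card V) (hex : ∃ S : Set V, IsRedIC G S) :
    redIC G = Fintype.card V ↔
      ∀ v : V, IsLeaf G v ∨ IsSupport G v ∨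
        (∃ w : V, G.Adj v w ∧ IsSupport G w ∧ deg G w = 3) ∨
        (∃ w u : V, G.Adj v w ∧ G.Adj w u ∧ u ≠ v ∧ deg G w = 2 ∧ deg G u = 2) :=
  stmt_15_general G hT hex
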